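/- arXiv:1406.0187 — 2 statements merged into one kernel-verified Lean document; each statement's English description precedes it below -/
import Mathlib

section
/- Let Θ be an M × d real matrix and let G = Θᵀ Θ be its Gram matrix. Suppose there are ε1, ε2 ≥ 0 such that for every index i, |G(i,i) − 1| ≤ ε1 and Σ_{j ≠ i} |G(i,j)| ≤ ε2, and set ε = ε1 + ε2. Then for every vector f ∈ ℝ^d, (1 − ε)·‖f‖² ≤ ‖Θ·f‖² ≤ (1 + ε)·‖f‖², where ‖·‖ denotes the Euclidean norm. In particular, if ε < 1 then Θ·f ≠ 0 for every f ≠ 0. -/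
open Matrix in
/-- RIP-type bound from the Gram matrix. Let `Θ` be an `M × d` real matrix
with Gram matrix `G = Θᵀ Θ`. If `|G i i − 1| ≤ ε1` and `Σ_{j ≠ i} |G i j| ≤ ε2` for every `i`,
and `ε = ε1 + ε2`, then `(1 − ε)‖f‖² ≤ ‖Θ f‖² ≤ (1 + ε)‖f‖²` for every `f ∈ ℝ^d` (squared
Euclidean norms); in particular, if `ε < 1` then `Θ f ≠ 0` for every `f ≠ 0`. -/
theorem piecewise_toeplitz_stmt4 {M d : ℕ} (Θ : Matrix (Fin M) (Fin d) ℝ)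
    (G : Matrix (Fin d) (Fin d) ℝ) (hG : G = Θᵀ * Θ)
    (ε1 ε2 ε : ℝ) (hε1 : 0 ≤ ε1) (hε2 : 0 ≤ ε2)
    (hdiag : ∀ i, |G i i - 1| ≤ ε1)
    (hoff : ∀ i, ∑ j ∈ Finset.univ.erase i, |G i j| ≤ ε2)
    (hε : ε = ε1 + ε2) :
    (∀ f : Fin d → ℝ,
        (1 - ε) * (∑ i, (f i) ^ 2) ≤ ∑ k, (Θ.mulVec f k) ^ 2 ∧
        ∑ k, (Θ.mulVec f k) ^ 2 ≤ (1 + ε) * (∑ i, (f i) ^ 2)) ∧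
      (ε < 1 → ∀ f : Fin d → ℝ, f ≠ 0 → Θ.mulVec f ≠ 0) := by
  have hsym : ∀ i j, G i j = G j i := by
    intro i j
    simp only [hG, Matrix.mul_apply, Matrix.transpose_apply]
    exact Finset.sum_congr rfl fun k _ => mul_comm _ _
  set E : Matrix (Fin d) (Fin d) ℝ := fun i j => G i j - if i = j then 1 else 0 with hE
  have hEsym : ∀ i j, E i j = E j i := by
    intro i j
    simp only [hE, hsym i j, eq_comm]
  have hrow : ∀ i, ∑ j, |E i j| ≤ ε := by
    intro i
    rw [← Finset.add_sum_erase _ _ (Finset.mem_univ i), hε]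
    refine add_le_add ?_ ?_
    · simpa [hE] using hdiag i
    · refine le_trans (le_of_eq ?_) (hoff i)
      refine Finset.sum_congr rfl fun j hj => ?_
      have : ¬ i = j := fun h => (Finset.mem_erase.mp hj).1 h.symm
      simp [hE, this]
  have hquad : ∀ f : Fin d → ℝ,
      ∑ k, (Θ.mulVec f k) ^ 2 = ∑ i, ∑ j, f i * G i j * f j := by
    intro f
    simp only [hG, Matrix.mulVec, dotProduct, Matrix.mul_apply,
      Matrix.transpose_apply, pow_two, Finset.sum_mul_sum, Finset.mul_sum,
      Finset.sum_mul]
    rw [Finset.sum_comm]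
    refine Finset.sum_congr rfl fun i _ => ?_
    rw [Finset.sum_comm]
    refine Finset.sum_congr rfl fun j _ => ?_
    refine Finset.sum_congr rfl fun k _ => ?_
    ring
  have key : ∀ f : Fin d → ℝ,
      |∑ k, (Θ.mulVec f k) ^ 2 - ∑ i, (f i) ^ 2| ≤ ε * ∑ i, (f i) ^ 2 := by
    intro f
    have hsplit : ∑ k, (Θ.mulVec f k) ^ 2 - ∑ i, (f i) ^ 2
        = ∑ i, ∑ j, f i * E i j * f j := by
      rw [hquad f, ← Finset.sum_sub_distrib]
      refine Finset.sum_congr rfl fun i _ => ?_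
      have h1 : ∀ j, f i * E i j * f j
          = f i * G i j * f j - (if i = j then f i * f j else 0) := by
        intro j; simp only [hE]; split <;> ring
      rw [Finset.sum_congr rfl fun j _ => h1 j, Finset.sum_sub_distrib,
        Finset.sum_ite_eq]
      simp [pow_two]
    have hA : ∑ i, ∑ j, |E i j| * (f i) ^ 2 ≤ ε * ∑ i, (f i) ^ 2 := by
      rw [Finset.mul_sum]
      refine Finset.sum_le_sum fun i _ => ?_
      rw [← Finset.sum_mul]
      exact mul_le_mul_of_nonneg_right (hrow i) (sq_nonneg _)
    have hB : ∑ i, ∑ j, |E i j| * (f j) ^ 2 ≤ ε * ∑ i, (f i) ^ 2 := by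
      rw [Finset.sum_comm, Finset.mul_sum]
      refine Finset.sum_le_sum fun j _ => ?_
      rw [← Finset.sum_mul]
      refine mul_le_mul_of_nonneg_right ?_ (sq_nonneg _)
      calc ∑ i, |E i j| = ∑ i, |E j i| :=
            Finset.sum_congr rfl fun i _ => by rw [hEsym]
        _ ≤ ε := hrow j
    have habs : |∑ i, ∑ j, f i * E i j * f j|
        ≤ ∑ i, ∑ j, |E i j| * ((f i) ^ 2 + (f j) ^ 2) / 2 := by
      refine le_trans (Finset.abs_sum_le_sum_abs _ _) ?_
      refine Finset.sum_le_sum fun i _ => ?_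
      refine le_trans (Finset.abs_sum_le_sum_abs _ _) ?_
      refine Finset.sum_le_sum fun j _ => ?_
      rw [abs_mul, abs_mul]
      nlinarith [sq_abs (f i), sq_abs (f j), sq_nonneg (|f i| - |f j|),
        abs_nonneg (f i), abs_nonneg (f j), abs_nonneg (E i j),
        mul_nonneg (abs_nonneg (f i)) (abs_nonneg (E i j))]
    have hhalf : ∑ i, ∑ j, |E i j| * ((f i) ^ 2 + (f j) ^ 2) / 2
        = ((∑ i, ∑ j, |E i j| * (f i) ^ 2) + ∑ i, ∑ j, |E i j| * (f j) ^ 2) / 2 := by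
      rw [← Finset.sum_add_distrib]
      rw [Finset.sum_div]
      refine Finset.sum_congr rfl fun i _ => ?_
      rw [← Finset.sum_add_distrib, Finset.sum_div]
      refine Finset.sum_congr rfl fun j _ => ?_
      ring
    rw [hsplit]
    calc |∑ i, ∑ j, f i * E i j * f j| ≤ _ := habs
      _ = _ := hhalf
      _ ≤ ε * ∑ i, (f i) ^ 2 := by linarith
  have hbounds : ∀ f : Fin d → ℝ,
      (1 - ε) * (∑ i, (f i) ^ 2) ≤ ∑ k, (Θ.mulVec f k) ^ 2 ∧
      ∑ k, (Θ.mulVec f k) ^ 2 ≤ (1 + ε) * (∑ i, (f i) ^ 2) := by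
    intro f
    have := abs_le.mp (key f)
    constructor <;> nlinarith [this.1, this.2]
  refine ⟨hbounds, fun hεlt f hf hcontra => ?_⟩
  have hSpos : 0 < ∑ i, (f i) ^ 2 := by
    rcases Function.ne_iff.mp hf with ⟨i, hi⟩
    exact Finset.sum_pos' (fun j _ => sq_nonneg _)
      ⟨i, Finset.mem_univ i, by have := pow_pos (abs_pos.mpr hi) 2; rwa [sq_abs] at this⟩
  have h0 : ∑ k, (Θ.mulVec f k) ^ 2 = 0 := by
    rw [hcontra]; simp
  have := (hbounds f).1
  nlinarith
end

section
/- Let 𝒜 : ℝ^{n1×n2} → ℝ^M be a linear map and r a natural number with 2r ≤ n2. Suppose that for every subset S of column indices with cardinality 2r, every coefficient array α : ({1,…,n2} \ S) × S → ℝ, and every family (x_i)_{i∈S} of vectors in ℝ^{n1} that are not all zero, the matrix Z whose i-th column equals x_i for i ∈ S and equals Σ_{j∈S} α(i,j)·x_j for i ∉ S satisfies 𝒜(Z) ≠ 0. Then for any two matrices X and X' with rank(X) ≤ r, rank(X') ≤ r and 𝒜(X) = 𝒜(X'), it holds that X = X'. -/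
open Matrix

/-- Let `𝒜 : ℝ^{n1×n2} → ℝ^M` be linear and `2r ≤ n2`. Suppose that for every
subset `S` of column indices with `|S| = 2r`, every coefficient array `α`, and every family
`(x_i)_{i∈S}` of vectors in `ℝ^{n1}` that are not all zero, the matrix whose `i`-th column is
`x_i` for `i ∈ S` and `Σ_{j∈S} α i j • x_j` for `i ∉ S` has nonzero image under `𝒜`. Then any
two matrices of rank at most `r` with the same image under `𝒜` coincide. -/
theorem piecewise_toeplitz_stmt5 {n1 n2 M r : ℕ} (hr : 2 * r ≤ n2)
    (𝒜 : Matrix (Fin n1) (Fin n2) ℝ →ₗ[ℝ] (Fin M → ℝ))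
    (h : ∀ S : Finset (Fin n2), S.card = 2 * r →
        ∀ α : Fin n2 → Fin n2 → ℝ, ∀ x : Fin n2 → (Fin n1 → ℝ),
        (∃ i ∈ S, x i ≠ 0) →
        𝒜 (Matrix.of fun q i => if i ∈ S then x i q else ∑ j ∈ S, α i j * x j q) ≠ 0)
    (X X' : Matrix (Fin n1) (Fin n2) ℝ)
    (hX : X.rank ≤ r) (hX' : X'.rank ≤ r) (hAXX' : 𝒜 X = 𝒜 X') :
    X = X' := by
  classical
  by_contra hne
  set Z : Matrix (Fin n1) (Fin n2) ℝ := X - X' with hZdef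
  have hZne : Z ≠ 0 := sub_ne_zero.mpr hne
  have hAZ : 𝒜 Z = 0 := by
    rw [hZdef, map_sub, hAXX', sub_self]
  -- column span of Z is contained in sup of column spans of X and X'
  set col : Fin n2 → (Fin n1 → ℝ) := fun j q => Z q j with hcol
  have hcolZ : Set.range col = Set.range Zᵀ := rfl
  have hspan_le : Submodule.span ℝ (Set.range Zᵀ) ≤
      Submodule.span ℝ (Set.range Xᵀ) ⊔ Submodule.span ℝ (Set.range X'ᵀ) := by
    rw [Submodule.span_le]
    rintro _ ⟨j, rfl⟩
    have : Zᵀ j = Xᵀ j - X'ᵀ j := by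
      funext q; simp [hZdef, Matrix.transpose_apply, Matrix.sub_apply]
    rw [this]
    exact sub_mem
      (Submodule.mem_sup_left (Submodule.subset_span ⟨j, rfl⟩))
      (Submodule.mem_sup_right (Submodule.subset_span ⟨j, rfl⟩))
  have hfr : Module.finrank ℝ (Submodule.span ℝ (Set.range Zᵀ)) ≤ 2 * r := by
    have h1 := Submodule.finrank_mono (M := Fin n1 → ℝ) (R := ℝ) hspan_le
    have h2 := Submodule.finrank_add_le_finrank_add_finrank
      (Submodule.span ℝ (Set.range Xᵀ)) (Submodule.span ℝ (Set.range X'ᵀ))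
    have hx : Module.finrank ℝ (Submodule.span ℝ (Set.range Xᵀ)) ≤ r := by
      rw [Matrix.rank_eq_finrank_span_cols] at hX; exact hX
    have hx' : Module.finrank ℝ (Submodule.span ℝ (Set.range X'ᵀ)) ≤ r := by
      rw [Matrix.rank_eq_finrank_span_cols] at hX'; exact hX'
    omega
  -- extract a linearly independent spanning subset of the columns
  obtain ⟨t, hts, htspan, htind⟩ := exists_linearIndependent ℝ (Set.range Zᵀ)
  have htfin : t.Finite := htind.setFinite
  haveI := htfin.fintype
  have htcard : t.toFinset.card ≤ 2 * r := by
    have := finrank_span_set_eq_card (R := ℝ) (s := t) htind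
    rw [htspan] at this
    omega
  -- choose indices realizing the vectors of t
  have hchoose : ∀ v ∈ t, ∃ j : Fin n2, Zᵀ j = v := fun v hv => hts hv
  choose f hf using hchoose
  set S0 : Finset (Fin n2) :=
    t.toFinset.attach.image (fun v => f v.1 (Set.mem_toFinset.mp v.2)) with hS0
  have hS0card : S0.card ≤ 2 * r := by
    calc S0.card ≤ t.toFinset.attach.card := Finset.card_image_le
    _ = t.toFinset.card := Finset.card_attach
    _ ≤ 2 * r := htcard
  obtain ⟨S, hS0S, _, hScard⟩ := Finset.exists_subsuperset_card_eq
    (Finset.subset_univ S0) hS0card (by simpa using hr)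
  -- every column of Z lies in the span of the S-columns
  have hmem : ∀ i : Fin n2, Zᵀ i ∈ Submodule.span ℝ (Set.range fun j : ↥S => Zᵀ (j : Fin n2)) := by
    intro i
    have h1 : Zᵀ i ∈ Submodule.span ℝ t := by
      rw [htspan]; exact Submodule.subset_span ⟨i, rfl⟩
    refine Submodule.span_le.mpr ?_ h1
    intro v hv
    have : Zᵀ (f v hv) = v := hf v hv
    have hmemS : f v hv ∈ S := hS0S (Finset.mem_image.mpr
      ⟨⟨v, Set.mem_toFinset.mpr hv⟩, Finset.mem_attach _ _, rfl⟩)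
    exact Submodule.subset_span ⟨⟨f v hv, hmemS⟩, this⟩
  have hmem' : ∀ i : Fin n2, ∃ c : ↥S → ℝ, ∑ j : ↥S, c j • Zᵀ (j : Fin n2) = Zᵀ i :=
    fun i => Submodule.mem_span_range_iff_exists_fun ℝ |>.mp (hmem i)
  choose c hc using hmem'
  set α : Fin n2 → Fin n2 → ℝ :=
    fun i j => if hj : j ∈ S then c i ⟨j, hj⟩ else 0 with hα
  -- the not-all-zero condition
  have hex : ∃ i ∈ S, Zᵀ i ≠ 0 := by
    by_contra hall
    push_neg at hall
    apply hZne
    ext q i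
    have h0 : Zᵀ i = 0 := by
      rw [← hc i]
      refine Finset.sum_eq_zero fun j _ => ?_
      rw [hall j j.2, smul_zero]
    have := congrFun h0 q
    simpa using this
  -- the matrix built from the columns of Z is Z itself
  have hZeq : (Matrix.of fun q i => if i ∈ S then Zᵀ i q
      else ∑ j ∈ S, α i j * Zᵀ j q) = Z := by
    ext q i
    by_cases hi : i ∈ S
    · simp [hi]
    · simp only [Matrix.of_apply, hi, if_false]
      have : ∑ j ∈ S, α i j * Zᵀ j q = ∑ j ∈ S.attach, c i j * Zᵀ (j : Fin n2) q := by
        rw [← Finset.sum_attach S (fun j => α i j * Zᵀ j q)]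
        refine Finset.sum_congr rfl fun j _ => ?_
        simp [hα, j.2]
      rw [this]
      have h2 := congrFun (hc i) q
      simp only [Finset.sum_apply, Pi.smul_apply, smul_eq_mul,
        Matrix.transpose_apply] at h2
      exact h2
  exact h S hScard α (fun j => Zᵀ j) hex (by rw [hZeq]; exact hAZ)
end
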